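/- arXiv:1302.3518 — 4 statements merged into one kernel-verified Lean document; each statement's English description precedes it below -/
import Mathlib

section
/- Suppose the packing LP max{wᵀ·x : x ∈ P} with P = {x ∈ RBox(X) : A·x ≤ b} has a unique optimal solution x* satisfying x*_i ∈ {0, X_i} for every 1 ≤ i ≤ n. Then for every M-lift π: G̃ → G of the factor graph G, the lifted packing LP max{w̃ᵀ·x̃ : x̃ ∈ P̃}, where P̃ is the lifted feasible polytope, has the lift of x* (defined by x̃*_ṽ = x*_{π(ṽ)}) as its unique optimal solution, and c(P̃, w̃) = c(P, w). -/
attribute [local instance] Classical.propDecidable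

/-- A covering map of (simple) graphs: a graph homomorphism `π : G' → G` whose restriction
to the neighbors of each vertex `v'` is a bijection onto the neighbors of `π v'`. -/
def IsGraphCoveringMap {V W : Type*} (G' : SimpleGraph V) (G : SimpleGraph W) (π : V → W) : Prop :=
  (∀ ⦃a b : V⦄, G'.Adj a b → G.Adj (π a) (π b)) ∧
  ∀ v : V, Set.BijOn π (G'.neighborSet v) (G.neighborSet (π v))

/-- The factor graph of the zero-one matrix `A`: a bipartite graph on variable vertices
`Fin n` (columns) and constraint vertices `Fin m` (rows), with an edge between `v_i` and
`C_j` iff `A j i = 1`. -/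
def factorGraph {n m : ℕ} (A : Matrix (Fin m) (Fin n) ℝ) : SimpleGraph (Fin n ⊕ Fin m) where
  Adj x y := (∃ i j, x = Sum.inl i ∧ y = Sum.inr j ∧ A j i = 1) ∨
             (∃ i j, x = Sum.inr j ∧ y = Sum.inl i ∧ A j i = 1)
  symm := by
    constructor
    rintro x y (⟨i, j, rfl, rfl, h⟩ | ⟨i, j, rfl, rfl, h⟩)
    · exact Or.inr ⟨i, j, rfl, rfl, h⟩
    · exact Or.inl ⟨i, j, rfl, rfl, h⟩
  loopless := by
    constructor
    rintro x (⟨i, j, h1, h2, -⟩ | ⟨i, j, h1, h2, -⟩) <;> subst h1 <;> simp_all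

/-!
Averaging over fibres, `ỹ ↦ (i ↦ 𝔼_{ṽ ∈ π⁻¹(vᵢ)} ỹ_ṽ)`, maps `P̃` into `P`: a lifted variable
vertex over `vᵢ` has exactly `A_{ji}` neighbours over `C_j`, so summing the lifted constraints over
the fibre of `C_j` gives `M` times the constraint `j` at the average. Averaging divides the lifted
objective by `M` and is a left inverse of the lift `x ↦ x ∘ π`, which maps `P` into `P̃`.
Since `x*` lies at a corner of the box, the differences `x*ᵢ - ỹ_ṽ` over one fibre all have the same
sign, so `‖x̃* - ỹ‖₁ = M ‖x* - avg ỹ‖₁`; in particular `avg ỹ = x*` forces `ỹ = x̃*`. Hence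
optimality and uniqueness of `x*` transfer to `x̃*`, and the ratio defining `c` takes the same
values on `P̃ ∖ {x̃*}` as on `P ∖ {x*}`.
-/

open Finset
open scoped BigOperators

theorem Finset.sum_abs_eq_abs_sum {ι G : Type*} [AddCommGroup G] [LinearOrder G]
    [IsOrderedAddMonoid G] {s : Finset ι} {g : ι → G}
    (h : (∀ v ∈ s, 0 ≤ g v) ∨ ∀ v ∈ s, g v ≤ 0) : ∑ v ∈ s, |g v| = |∑ v ∈ s, g v| := by
  rcases h with h | h
  · rw [abs_sum_of_nonneg h]
    exact sum_congr rfl fun v hv => abs_of_nonneg (h v hv)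
  · rw [← abs_neg, ← sum_neg_distrib, abs_sum_of_nonneg fun v hv => neg_nonneg.2 (h v hv)]
    exact sum_congr rfl fun v hv => abs_of_nonpos (h v hv)

theorem card_filter_eq_nat_card_preimage {α β : Type*} [Fintype α] [DecidableEq β]
    (f : α → β) (b : β) : #{a | f a = b} = Nat.card (f ⁻¹' {b}) := by
  rw [Nat.card_eq_card_toFinset]
  congr 1
  ext
  simp

theorem IsGraphCoveringMap.card_adj_fiber {V W : Type*} [Fintype V] [DecidableEq W]
    {G' : SimpleGraph V} [DecidableRel G'.Adj] {G : SimpleGraph W} {π : V → W}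
    (hπ : IsGraphCoveringMap G' G π) (v : V) (w : W) :
    #{v' | G'.Adj v v' ∧ π v' = w} = if G.Adj (π v) w then 1 else 0 := by
  split_ifs with h
  · obtain ⟨v', hv', rfl⟩ := (hπ.2 v).surjOn h
    refine card_eq_one.2 ⟨v', eq_singleton_iff_unique_mem.2 ⟨by simpa using hv', ?_⟩⟩
    intro u hu
    simp only [mem_filter, mem_univ, true_and] at hu
    exact (hπ.2 v).injOn hu.1 hv' hu.2
  · simp only [card_eq_zero, filter_eq_empty_iff, mem_univ, true_implies, not_and]
    rintro v' hv' rfl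
    exact h (hπ.1 hv')

section FactorGraph

variable {n m : ℕ} {A : Matrix (Fin m) (Fin n) ℝ}

@[simp]
theorem factorGraph_adj_inl_inr {i : Fin n} {j : Fin m} :
    (factorGraph A).Adj (Sum.inl i) (Sum.inr j) ↔ A j i = 1 := by
  simp [factorGraph]

@[simp]
theorem factorGraph_adj_inr_inl {i : Fin n} {j : Fin m} :
    (factorGraph A).Adj (Sum.inr j) (Sum.inl i) ↔ A j i = 1 := by
  simp [factorGraph]

theorem eq_ite_factorGraph_adj (hA : ∀ j i, A j i = 0 ∨ A j i = 1) (i : Fin n) (j : Fin m) :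
    A j i = if (factorGraph A).Adj (Sum.inl i) (Sum.inr j) then 1 else 0 := by
  rcases hA j i with h | h <;> simp [h]

end FactorGraph

section LiftedPackingLP

variable {n m : ℕ} {V' : Type*} {π : V' → Fin n ⊕ Fin m}

abbrev LiftedVar (π : V' → Fin n ⊕ Fin m) : Type _ := {v' : V' // ∃ i, π v' = Sum.inl i}

noncomputable def LiftedVar.base (v : LiftedVar π) : Fin n := v.2.choose

theorem LiftedVar.map_eq_inl_base (v : LiftedVar π) : π v.1 = Sum.inl v.base := v.2.choose_spec

theorem LiftedVar.base_eq_iff {v : LiftedVar π} {i : Fin n} : v.base = i ↔ π v.1 = Sum.inl i := by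
  rw [v.map_eq_inl_base, Sum.inl.injEq]

def liftPoint (π : V' → Fin n ⊕ Fin m) (x : Fin n → ℝ) : LiftedVar π → ℝ :=
  fun v => Sum.elim x (fun _ => 0) (π v.1)

@[simp]
theorem liftPoint_apply (x : Fin n → ℝ) (v : LiftedVar π) : liftPoint π x v = x v.base := by
  simp [liftPoint, v.map_eq_inl_base]

def packingPolytope (A : Matrix (Fin m) (Fin n) ℝ) (b : Fin m → ℝ) (X : Fin n → ℕ) :
    Set (Fin n → ℝ) :=
  {x | (∀ i, 0 ≤ x i ∧ x i ≤ (X i : ℝ)) ∧ ∀ j, (∑ i, A j i * x i) ≤ b j}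

def liftedPolytope (G' : SimpleGraph V') (π : V' → Fin n ⊕ Fin m) (b : Fin m → ℝ)
    (X : Fin n → ℕ) : Set (LiftedVar π → ℝ) :=
  {xt | (∀ (v' : LiftedVar π) (i), π v'.1 = Sum.inl i → 0 ≤ xt v' ∧ xt v' ≤ (X i : ℝ)) ∧
    ∀ (c' : V') (j), π c' = Sum.inr j →
      (∑ᶠ u' : LiftedVar π, if G'.Adj c' u'.1 then xt u' else 0) ≤ b j}

variable {A : Matrix (Fin m) (Fin n) ℝ} {G' : SimpleGraph V'} {b : Fin m → ℝ} {X : Fin n → ℕ}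

theorem box_of_mem_liftedPolytope {yt : LiftedVar π → ℝ} (hyt : yt ∈ liftedPolytope G' π b X)
    (v : LiftedVar π) : 0 ≤ yt v ∧ yt v ≤ X v.base :=
  hyt.1 v _ v.map_eq_inl_base

variable [Fintype V'] {M : ℕ}

noncomputable def LiftedVar.fiber (π : V' → Fin n ⊕ Fin m) (i : Fin n) : Finset (LiftedVar π) :=
  {v | v.base = i}

@[simp]
theorem LiftedVar.mem_fiber {v : LiftedVar π} {i : Fin n} : v ∈ fiber π i ↔ v.base = i := by
  simp [fiber]

noncomputable def fiberAvg (f : LiftedVar π → ℝ) (i : Fin n) : ℝ :=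
  𝔼 v ∈ LiftedVar.fiber π i, f v

theorem LiftedVar.card_fiber (hfib : ∀ u, Nat.card (π ⁻¹' {u}) = M) (i : Fin n) :
    #(fiber π i) = M := by
  rw [← hfib (Sum.inl i), ← card_filter_eq_nat_card_preimage]
  refine card_nbij Subtype.val (fun v hv => ?_) Subtype.val_injective.injOn (fun v' hv' => ?_)
  · simpa [base_eq_iff] using hv
  · simp only [coe_filter, mem_univ, true_and] at hv'
    exact ⟨⟨v', i, hv'⟩, by simpa [base_eq_iff] using hv', rfl⟩

theorem finsum_eq_sum_fiber (F : LiftedVar π → ℝ) :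
    ∑ᶠ v, F v = ∑ i, ∑ v ∈ LiftedVar.fiber π i, F v := by
  rw [finsum_eq_sum_of_fintype, ← sum_fiberwise univ LiftedVar.base]
  rfl

theorem sum_fiber_eq_mul_fiberAvg (hfib : ∀ u, Nat.card (π ⁻¹' {u}) = M)
    (f : LiftedVar π → ℝ) (i : Fin n) : ∑ v ∈ LiftedVar.fiber π i, f v = M * fiberAvg f i := by
  rw [fiberAvg, ← LiftedVar.card_fiber hfib i, card_mul_expect]

theorem fiberAvg_sub (f g : LiftedVar π → ℝ) (i : Fin n) :
    fiberAvg (fun v => f v - g v) i = fiberAvg f i - fiberAvg g i :=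
  expect_sub_distrib _ _ _

theorem fiberAvg_liftPoint (hfib : ∀ u, Nat.card (π ⁻¹' {u}) = M) (hM : M ≠ 0)
    (x : Fin n → ℝ) : fiberAvg (liftPoint π x) = x := by
  funext i
  have hne : (LiftedVar.fiber π i).Nonempty := by
    rw [← card_ne_zero, LiftedVar.card_fiber hfib]; exact hM
  rw [fiberAvg, expect_congr rfl fun v hv => by rw [liftPoint_apply, LiftedVar.mem_fiber.1 hv],
    expect_const hne]

theorem liftPoint_injective (hfib : ∀ u, Nat.card (π ⁻¹' {u}) = M) (hM : M ≠ 0) :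
    Function.Injective (liftPoint π) :=
  Function.LeftInverse.injective (fiberAvg_liftPoint hfib hM)

theorem finsum_liftPoint_mul (hfib : ∀ u, Nat.card (π ⁻¹' {u}) = M) (w : Fin n → ℝ)
    (f : LiftedVar π → ℝ) : ∑ᶠ v, liftPoint π w v * f v = M * ∑ i, w i * fiberAvg f i := by
  rw [finsum_eq_sum_fiber, mul_sum]
  refine sum_congr rfl fun i _ => ?_
  rw [sum_congr rfl fun v hv => by rw [liftPoint_apply, LiftedVar.mem_fiber.1 hv], ← mul_sum,
    sum_fiber_eq_mul_fiberAvg hfib]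
  ring

theorem finsum_abs_liftPoint_sub (hfib : ∀ u, Nat.card (π ⁻¹' {u}) = M)
    {x X : Fin n → ℝ} (hbdry : ∀ i, x i = 0 ∨ x i = X i) {yt : LiftedVar π → ℝ}
    (hbox : ∀ v, 0 ≤ yt v ∧ yt v ≤ X v.base) :
    ∑ᶠ v, |liftPoint π x v - yt v| = M * ∑ i, |x i - fiberAvg yt i| := by
  rw [finsum_eq_sum_fiber, mul_sum]
  refine sum_congr rfl fun i _ => ?_
  have hbase : ∀ v ∈ LiftedVar.fiber π i, v.base = i := fun v => LiftedVar.mem_fiber.1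
  have hsign : (∀ v ∈ LiftedVar.fiber π i, 0 ≤ x i - yt v) ∨
      ∀ v ∈ LiftedVar.fiber π i, x i - yt v ≤ 0 := by
    rcases hbdry i with h | h
    · exact Or.inr fun v _ => by linarith [(hbox v).1]
    · exact Or.inl fun v hv => by linarith [hbase v hv ▸ (hbox v).2]
  rw [sum_congr rfl fun v hv => by rw [liftPoint_apply, hbase v hv], sum_abs_eq_abs_sum hsign,
    sum_sub_distrib, sum_const, LiftedVar.card_fiber hfib, sum_fiber_eq_mul_fiberAvg hfib,
    nsmul_eq_mul, ← mul_sub, abs_mul, Nat.abs_cast]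

theorem eq_liftPoint_of_fiberAvg_eq (hfib : ∀ u, Nat.card (π ⁻¹' {u}) = M)
    {x X : Fin n → ℝ} (hbdry : ∀ i, x i = 0 ∨ x i = X i) {yt : LiftedVar π → ℝ}
    (hbox : ∀ v, 0 ≤ yt v ∧ yt v ≤ X v.base) (h : fiberAvg yt = x) : yt = liftPoint π x := by
  have hdist := finsum_abs_liftPoint_sub hfib hbdry hbox
  simp only [h, sub_self, abs_zero, sum_const_zero, mul_zero, finsum_eq_sum_of_fintype] at hdist
  funext v
  have hv := (sum_eq_zero_iff_of_nonneg fun v _ => abs_nonneg _).1 hdist v (mem_univ v)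
  exact (sub_eq_zero.1 (abs_eq_zero.1 hv)).symm

theorem liftedRatio_eq (hfib : ∀ u, Nat.card (π ⁻¹' {u}) = M) (hM : M ≠ 0)
    (w : Fin n → ℝ) {x X : Fin n → ℝ} (hbdry : ∀ i, x i = 0 ∨ x i = X i) {yt : LiftedVar π → ℝ}
    (hbox : ∀ v, 0 ≤ yt v ∧ yt v ≤ X v.base) :
    (∑ᶠ v, liftPoint π w v * (liftPoint π x v - yt v)) / ∑ᶠ v, |liftPoint π x v - yt v| =
      (∑ i, w i * (x i - fiberAvg yt i)) / ∑ i, |x i - fiberAvg yt i| := by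
  simp_rw [finsum_liftPoint_mul hfib, finsum_abs_liftPoint_sub hfib hbdry hbox, fiberAvg_sub,
    fiberAvg_liftPoint hfib hM]
  exact mul_div_mul_left _ _ (Nat.cast_ne_zero.2 hM)

theorem finsum_adj_liftPoint (hcov : IsGraphCoveringMap G' (factorGraph A) π)
    (hA : ∀ j i, A j i = 0 ∨ A j i = 1) {c' : V'} {j : Fin m} (hc : π c' = Sum.inr j)
    (x : Fin n → ℝ) :
    ∑ᶠ u' : LiftedVar π, (if G'.Adj c' u'.1 then liftPoint π x u' else 0) = ∑ i, A j i * x i := by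
  simp_rw [finsum_eq_sum_of_fintype, ← sum_filter, eq_ite_factorGraph_adj hA, ite_mul, one_mul,
    zero_mul, ← sum_filter, factorGraph_adj_inl_inr]
  refine sum_nbij LiftedVar.base (fun u hu => ?_) (fun u hu u' hu' h => ?_) (fun i hi => ?_)
    fun u _ => liftPoint_apply x u
  · simp only [mem_filter, mem_univ, true_and] at hu ⊢
    simpa [hc, u.map_eq_inl_base] using hcov.1 hu
  · simp only [coe_filter, mem_univ, true_and] at hu hu'
    exact Subtype.ext <| (hcov.2 c').injOn hu hu' <| by
      rw [u.map_eq_inl_base, u'.map_eq_inl_base, h]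
  · simp only [coe_filter, mem_univ, true_and] at hi
    have : Sum.inl i ∈ (factorGraph A).neighborSet (π c') := by simpa [hc] using hi
    obtain ⟨v', hv', hv'i⟩ := (hcov.2 c').surjOn this
    exact ⟨⟨v', i, hv'i⟩, by simpa using hv', LiftedVar.base_eq_iff.2 hv'i⟩

theorem sum_fiber_finsum_adj (hcov : IsGraphCoveringMap G' (factorGraph A) π)
    (hA : ∀ j i, A j i = 0 ∨ A j i = 1) (hfib : ∀ u, Nat.card (π ⁻¹' {u}) = M)
    (yt : LiftedVar π → ℝ) (j : Fin m) :
    ∑ c' with π c' = Sum.inr j, ∑ᶠ u' : LiftedVar π, (if G'.Adj c' u'.1 then yt u' else 0) =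
      M * ∑ i, A j i * fiberAvg yt i := by
  calc _ = ∑ u' : LiftedVar π, (#{c' | G'.Adj u'.1 c' ∧ π c' = Sum.inr j} : ℝ) * yt u' := by
        simp_rw [finsum_eq_sum_of_fintype]
        rw [sum_comm]
        refine sum_congr rfl fun u' _ => ?_
        rw [← sum_filter, sum_const, nsmul_eq_mul]
        congr 3
        ext c'
        simp [G'.adj_comm, and_comm]
    _ = ∑ᶠ u', liftPoint π (fun i => A j i) u' * yt u' := by
        rw [finsum_eq_sum_of_fintype]
        refine sum_congr rfl fun u' _ => ?_
        rw [hcov.card_adj_fiber, u'.map_eq_inl_base, liftPoint_apply,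
          eq_ite_factorGraph_adj hA u'.base j, Nat.cast_ite, Nat.cast_one, Nat.cast_zero]
    _ = _ := finsum_liftPoint_mul hfib _ _

theorem liftPoint_mem_liftedPolytope (hcov : IsGraphCoveringMap G' (factorGraph A) π)
    (hA : ∀ j i, A j i = 0 ∨ A j i = 1) {x : Fin n → ℝ} (hx : x ∈ packingPolytope A b X) :
    liftPoint π x ∈ liftedPolytope G' π b X := by
  refine ⟨fun v i hv => ?_, fun c' j hc => ?_⟩
  · rw [liftPoint_apply, LiftedVar.base_eq_iff.2 hv]
    exact hx.1 i
  · rw [finsum_adj_liftPoint hcov hA hc]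
    exact hx.2 j

theorem fiberAvg_mem_packingPolytope (hcov : IsGraphCoveringMap G' (factorGraph A) π)
    (hA : ∀ j i, A j i = 0 ∨ A j i = 1) (hfib : ∀ u, Nat.card (π ⁻¹' {u}) = M) (hM : M ≠ 0)
    {yt : LiftedVar π → ℝ} (hyt : yt ∈ liftedPolytope G' π b X) :
    fiberAvg yt ∈ packingPolytope A b X := by
  refine ⟨fun i => ⟨expect_nonneg fun v _ => ?_, expect_le ?_ fun v hv => ?_⟩, fun j => ?_⟩
  · exact (box_of_mem_liftedPolytope hyt v).1
  · rw [← card_ne_zero, LiftedVar.card_fiber hfib]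
    exact hM
  · simpa [LiftedVar.mem_fiber.1 hv] using (box_of_mem_liftedPolytope hyt v).2
  · have hM' : (0 : ℝ) < M := by positivity
    refine le_of_mul_le_mul_left ?_ hM'
    calc (M : ℝ) * ∑ i, A j i * fiberAvg yt i
        = ∑ c' with π c' = Sum.inr j, ∑ᶠ u' : LiftedVar π,
            (if G'.Adj c' u'.1 then yt u' else 0) := (sum_fiber_finsum_adj hcov hA hfib yt j).symm
      _ ≤ ∑ c' with π c' = Sum.inr j, b j :=
          sum_le_sum fun c' hc' => hyt.2 c' j (mem_filter.1 hc').2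
      _ = M * b j := by rw [sum_const, card_filter_eq_nat_card_preimage, hfib, nsmul_eq_mul]

theorem setOf_liftedRatio_eq (hcov : IsGraphCoveringMap G' (factorGraph A) π)
    (hA : ∀ j i, A j i = 0 ∨ A j i = 1) (hfib : ∀ u, Nat.card (π ⁻¹' {u}) = M) (hM : M ≠ 0)
    (w : Fin n → ℝ) {x : Fin n → ℝ} (hbdry : ∀ i, x i = 0 ∨ x i = X i) :
    {c | ∃ yt ∈ liftedPolytope G' π b X, yt ≠ liftPoint π x ∧
        c = (∑ᶠ v, liftPoint π w v * (liftPoint π x v - yt v)) /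
          ∑ᶠ v, |liftPoint π x v - yt v|} =
      {c | ∃ y ∈ packingPolytope A b X, y ≠ x ∧
        c = (∑ i, w i * (x i - y i)) / ∑ i, |x i - y i|} := by
  ext c
  constructor
  · rintro ⟨yt, hyt, hne, rfl⟩
    have hbox := box_of_mem_liftedPolytope hyt
    exact ⟨fiberAvg yt, fiberAvg_mem_packingPolytope hcov hA hfib hM hyt,
      fun h => hne (eq_liftPoint_of_fiberAvg_eq hfib hbdry hbox h),
      liftedRatio_eq hfib hM w hbdry hbox⟩
  · rintro ⟨y, hy, hne, rfl⟩
    have hyt := liftPoint_mem_liftedPolytope hcov hA hy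
    refine ⟨liftPoint π y, hyt, (liftPoint_injective hfib hM).ne hne, ?_⟩
    rw [liftedRatio_eq hfib hM w hbdry (box_of_mem_liftedPolytope hyt), fiberAvg_liftPoint hfib hM]

end LiftedPackingLP

theorem lifted_LP_unique_opt_and_c_eq_general (n m : ℕ)
    (A : Matrix (Fin m) (Fin n) ℝ) (hA : ∀ j i, A j i = 0 ∨ A j i = 1)
    (b : Fin m → ℝ) (w : Fin n → ℝ) (X : Fin n → ℕ)
    (xstar : Fin n → ℝ)
    (hfeas : (∀ i, 0 ≤ xstar i ∧ xstar i ≤ (X i : ℝ)) ∧ ∀ j, (∑ i, A j i * xstar i) ≤ b j)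
    (hopt : ∀ y : Fin n → ℝ,
      ((∀ i, 0 ≤ y i ∧ y i ≤ (X i : ℝ)) ∧ ∀ j, (∑ i, A j i * y i) ≤ b j) →
      (∑ i, w i * y i) ≤ ∑ i, w i * xstar i)
    (huniq : ∀ y : Fin n → ℝ,
      ((∀ i, 0 ≤ y i ∧ y i ≤ (X i : ℝ)) ∧ ∀ j, (∑ i, A j i * y i) ≤ b j) →
      (∑ i, w i * y i) = (∑ i, w i * xstar i) → y = xstar)
    (hbdry : ∀ i, xstar i = 0 ∨ xstar i = (X i : ℝ))
    (V' : Type) [Finite V'] (M : ℕ) (hM : 1 ≤ M)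
    (G' : SimpleGraph V') (π : V' → Fin n ⊕ Fin m)
    (hcov : IsGraphCoveringMap G' (factorGraph A) π)
    (hfib : ∀ u : Fin n ⊕ Fin m, Nat.card (π ⁻¹' {u}) = M) :
    letI D := {v' : V' // ∃ i, π v' = Sum.inl i}
    letI wt : D → ℝ := fun v' => Sum.elim w (fun _ => 0) (π v'.1)
    letI Pt : Set (D → ℝ) :=
      {xt | (∀ (v' : D) (i), π v'.1 = Sum.inl i → 0 ≤ xt v' ∧ xt v' ≤ (X i : ℝ)) ∧
        ∀ (c' : V') (j), π c' = Sum.inr j →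
          (∑ᶠ u' : D, if G'.Adj c' u'.1 then xt u' else 0) ≤ b j}
    letI xstarLift : D → ℝ := fun v' => Sum.elim xstar (fun _ => 0) (π v'.1)
    xstarLift ∈ Pt ∧
    (∀ yt ∈ Pt, (∑ᶠ v' : D, wt v' * yt v') ≤ ∑ᶠ v' : D, wt v' * xstarLift v') ∧
    (∀ yt ∈ Pt, (∑ᶠ v' : D, wt v' * yt v') = (∑ᶠ v' : D, wt v' * xstarLift v') →
      yt = xstarLift) ∧
    sInf {c : ℝ | ∃ xt ∈ Pt, xt ≠ xstarLift ∧
        c = (∑ᶠ v' : D, wt v' * (xstarLift v' - xt v')) /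
            (∑ᶠ v' : D, |xstarLift v' - xt v'|)} =
      sInf {c : ℝ | ∃ x : Fin n → ℝ,
        ((∀ i, 0 ≤ x i ∧ x i ≤ (X i : ℝ)) ∧ ∀ j, (∑ i, A j i * x i) ≤ b j) ∧ x ≠ xstar ∧
        c = (∑ i, w i * (xstar i - x i)) / (∑ i, |xstar i - x i|)} := by
  have := Fintype.ofFinite V'
  have hM0 : M ≠ 0 := by omega
  have hMpos : (0 : ℝ) < M := by positivity
  have hobj := finsum_liftPoint_mul hfib w
  have hxstar := fiberAvg_liftPoint hfib hM0 xstar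
  refine ⟨liftPoint_mem_liftedPolytope hcov hA hfeas, fun yt hyt => ?_, fun yt hyt heq => ?_,
    congrArg sInf (setOf_liftedRatio_eq hcov hA hfib hM0 w hbdry)⟩
  · change ∑ᶠ v, liftPoint π w v * yt v ≤ ∑ᶠ v, liftPoint π w v * liftPoint π xstar v
    rw [hobj, hobj, hxstar]
    exact mul_le_mul_of_nonneg_left (hopt _ (fiberAvg_mem_packingPolytope hcov hA hfib hM0 hyt))
      hMpos.le
  · change ∑ᶠ v, liftPoint π w v * yt v = ∑ᶠ v, liftPoint π w v * liftPoint π xstar v at heq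
    rw [hobj, hobj, hxstar, mul_right_inj' hMpos.ne'] at heq
    exact eq_liftPoint_of_fiberAvg_eq hfib hbdry (box_of_mem_liftedPolytope hyt)
      (huniq _ (fiberAvg_mem_packingPolytope hcov hA hfib hM0 hyt) heq)

/-- **Observation A.3**: if the packing LP has a unique optimal solution `x*` with every
coordinate on the boundary of the box (`x*_i ∈ {0, X_i}`), then for every `M`-lift of the
factor graph the lifted packing LP has the lift of `x*` as its unique optimal solution, and
`c(P̃, w̃) = c(P, w)`. -/
theorem lifted_LP_unique_opt_and_c_eq (n m : ℕ)
    (A : Matrix (Fin m) (Fin n) ℝ) (hA : ∀ j i, A j i = 0 ∨ A j i = 1)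
    (b : Fin m → ℝ) (hb : ∀ j, 0 ≤ b j) (w : Fin n → ℝ) (X : Fin n → ℕ)
    (xstar : Fin n → ℝ)
    (hfeas : (∀ i, 0 ≤ xstar i ∧ xstar i ≤ (X i : ℝ)) ∧ ∀ j, (∑ i, A j i * xstar i) ≤ b j)
    (hopt : ∀ y : Fin n → ℝ,
      ((∀ i, 0 ≤ y i ∧ y i ≤ (X i : ℝ)) ∧ ∀ j, (∑ i, A j i * y i) ≤ b j) →
      (∑ i, w i * y i) ≤ ∑ i, w i * xstar i)
    (huniq : ∀ y : Fin n → ℝ,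
      ((∀ i, 0 ≤ y i ∧ y i ≤ (X i : ℝ)) ∧ ∀ j, (∑ i, A j i * y i) ≤ b j) →
      (∑ i, w i * y i) = (∑ i, w i * xstar i) → y = xstar)
    (hbdry : ∀ i, xstar i = 0 ∨ xstar i = (X i : ℝ))
    (V' : Type) [Finite V'] (M : ℕ) (hM : 1 ≤ M)
    (G' : SimpleGraph V') (π : V' → Fin n ⊕ Fin m)
    (hcov : IsGraphCoveringMap G' (factorGraph A) π)
    (hfib : ∀ u : Fin n ⊕ Fin m, Nat.card (π ⁻¹' {u}) = M) :
    letI D := {v' : V' // ∃ i, π v' = Sum.inl i}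
    letI wt : D → ℝ := fun v' => Sum.elim w (fun _ => 0) (π v'.1)
    letI Pt : Set (D → ℝ) :=
      {xt | (∀ (v' : D) (i), π v'.1 = Sum.inl i → 0 ≤ xt v' ∧ xt v' ≤ (X i : ℝ)) ∧
        ∀ (c' : V') (j), π c' = Sum.inr j →
          (∑ᶠ u' : D, if G'.Adj c' u'.1 then xt u' else 0) ≤ b j}
    letI xstarLift : D → ℝ := fun v' => Sum.elim xstar (fun _ => 0) (π v'.1)
    xstarLift ∈ Pt ∧
    (∀ yt ∈ Pt, (∑ᶠ v' : D, wt v' * yt v') ≤ ∑ᶠ v' : D, wt v' * xstarLift v') ∧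
    (∀ yt ∈ Pt, (∑ᶠ v' : D, wt v' * yt v') = (∑ᶠ v' : D, wt v' * xstarLift v') →
      yt = xstarLift) ∧
    sInf {c : ℝ | ∃ xt ∈ Pt, xt ≠ xstarLift ∧
        c = (∑ᶠ v' : D, wt v' * (xstarLift v' - xt v')) /
            (∑ᶠ v' : D, |xstarLift v' - xt v'|)} =
      sInf {c : ℝ | ∃ x : Fin n → ℝ,
        ((∀ i, 0 ≤ x i ∧ x i ≤ (X i : ℝ)) ∧ ∀ j, (∑ i, A j i * x i) ≤ b j) ∧ x ≠ xstar ∧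
        c = (∑ i, w i * (xstar i - x i)) / (∑ i, |xstar i - x i|)} :=
  lifted_LP_unique_opt_and_c_eq_general n m A hA b w X xstar hfeas hopt huniq hbdry V' M hM G' π
    hcov hfib
end

section
/- Let π: G̃ → G be an M-lift of the factor graph of the packing LP, and let x̃ be a valid assignment for the lifted problem, i.e., 0 ≤ x̃_ṽ ≤ X_{π(ṽ)} for every lifted variable vertex ṽ and Σ_{ũ∈N(C̃)} x̃_ũ ≤ b_{π(C̃)} for every lifted constraint vertex C̃. Then the average assignment avg(x̃), defined by avg(x̃)_v = (1/M)·Σ_{ṽ∈π^{-1}(v)} x̃_ṽ, is a feasible solution of the packing LP: avg(x̃) ∈ RBox(X) and A·avg(x̃) ≤ b. Moreover, wᵀ·avg(x̃) = (1/M)·Σ_ṽ w_{π(ṽ)}·x̃_ṽ. -/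
attribute [local instance] Classical.propDecidable

/-!
Over a constraint vertex `C_j`, every lifted variable vertex above `v_i` has exactly `A j i`
lifted neighbours in the fibre of `C_j`, because a covering map is a local bijection. Summing the
lifted constraints over that fibre therefore gives `∑ i, A j i * (fibre sum over v_i) ≤ M * b j`,
which is `M` times the constraint for the average. The box constraints and the objective are
plain fibrewise sums.
-/

open Finset

section Fibers

variable {V W : Type*} [Fintype V] [DecidableEq W] (π : V → W)

theorem finsum_mem_preimage_singleton_eq_sum {R : Type*} [AddCommMonoid R] (f : V → R) (u : W) :
    ∑ᶠ v ∈ π ⁻¹' {u}, f v = ∑ v with π v = u, f v := by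
  rw [← finsum_mem_coe_finset]
  congr
  ext
  simp

theorem nat_card_preimage_singleton_eq_card_filter (u : W) :
    Nat.card (π ⁻¹' {u}) = #{v | π v = u} := by
  rw [Nat.card_eq_card_toFinset]
  congr
  ext
  simp

theorem sum_comp_mul_eq_sum_mul_sum_fiber {R : Type*} [NonUnitalNonAssocSemiring R] [Fintype W]
    (g : W → R) (f : V → R) :
    ∑ v, g (π v) * f v = ∑ u, g u * ∑ v with π v = u, f v := by
  rw [← sum_fiberwise univ π]
  refine sum_congr rfl fun u _ => ?_
  rw [mul_sum]
  refine sum_congr rfl fun v hv => ?_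
  rw [(mem_filter.1 hv).2]

end Fibers

namespace IsGraphCoveringMap

variable {V W : Type*} {G' : SimpleGraph V} {G : SimpleGraph W} {π : V → W}

theorem card_filter_fiber_adj [Fintype V] [DecidableEq W] [DecidableRel G'.Adj]
    (hπ : IsGraphCoveringMap G' G π) (v : V) (u : W) :
    #{c | π c = u ∧ G'.Adj v c} = if G.Adj (π v) u then 1 else 0 := by
  split_ifs with hadj
  · obtain ⟨c, hvc, rfl⟩ := (hπ.2 v).surjOn hadj
    rw [card_eq_one]
    refine ⟨c, eq_singleton_iff_unique_mem.2 ⟨by simpa using hvc, fun d hd => ?_⟩⟩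
    rw [mem_filter] at hd
    exact (hπ.2 v).injOn hd.2.2 hvc hd.2.1
  · rw [card_eq_zero, filter_eq_empty_iff]
    rintro c - ⟨rfl, hvc⟩
    exact hadj (hπ.1 hvc)

theorem sum_fiber_sum_adj [Fintype V] [Fintype W] [DecidableEq W] [DecidableRel G'.Adj]
    [DecidableRel G.Adj] {R : Type*} [AddCommMonoid R]
    (hπ : IsGraphCoveringMap G' G π) (f : V → R) (u : W) :
    ∑ c with π c = u, ∑ v with G'.Adj c v, f v = ∑ x with G.Adj u x, ∑ v with π v = x, f v := by
  calc ∑ c with π c = u, ∑ v with G'.Adj c v, f v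
      = ∑ v, #{c | π c = u ∧ G'.Adj v c} • f v := by
        simp only [sum_filter, card_filter, sum_smul, ite_smul, one_smul, zero_smul]
        rw [sum_comm]
        refine sum_congr rfl fun c _ => ?_
        by_cases hc : π c = u <;> simp [hc, G'.adj_comm]
    _ = ∑ v with G.Adj u (π v), f v := by
        simp only [hπ.card_filter_fiber_adj, ite_smul, one_smul, zero_smul, sum_filter, G.adj_comm]
    _ = ∑ x with G.Adj u x, ∑ v with π v = x, f v := by
        rw [← sum_fiberwise_of_maps_to (t := {x | G.Adj u x}) (g := π) (by simp)]
        refine sum_congr rfl fun x hx => ?_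
        rw [filter_filter]
        refine sum_congr (filter_congr fun v _ => ?_) fun _ _ => rfl
        constructor
        · exact And.right
        · rintro rfl
          exact ⟨(mem_filter.1 hx).2, rfl⟩

end IsGraphCoveringMap

theorem factorGraph_sum_adj_inr {n m : ℕ} {A : Matrix (Fin m) (Fin n) ℝ}
    (hA : ∀ j i, A j i = 0 ∨ A j i = 1) (g : Fin n ⊕ Fin m → ℝ) (j : Fin m) :
    ∑ x with (factorGraph A).Adj (Sum.inr j) x, g x = ∑ i, A j i * g (Sum.inl i) := by
  rw [sum_filter, Fintype.sum_sum_type]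
  simp only [factorGraph, Sum.inr.injEq, Sum.inl.injEq, reduceCtorEq, false_and, and_false,
    exists_false, false_or, exists_and_left, exists_eq_left', if_false, sum_const_zero, add_zero]
  refine sum_congr rfl fun i _ => ?_
  rcases hA j i with h | h <;> simp [h]

theorem average_of_lift_assignment_feasible_general (n m : ℕ)
    (A : Matrix (Fin m) (Fin n) ℝ) (hA : ∀ j i, A j i = 0 ∨ A j i = 1)
    (b : Fin m → ℝ) (w : Fin n → ℝ) (X : Fin n → ℕ)
    (V' : Type) [Finite V'] (M : ℕ) (hM : 1 ≤ M)
    (G' : SimpleGraph V') (π : V' → Fin n ⊕ Fin m)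
    (hcov : IsGraphCoveringMap G' (factorGraph A) π)
    (hfib : ∀ u : Fin n ⊕ Fin m, Nat.card (π ⁻¹' {u}) = M)
    (xt : V' → ℝ)
    (hbox : ∀ v' i, π v' = Sum.inl i → 0 ≤ xt v' ∧ xt v' ≤ (X i : ℝ))
    (hcons : ∀ c' j, π c' = Sum.inr j →
      (∑ᶠ u' : V', if G'.Adj c' u' then xt u' else 0) ≤ b j) :
    letI avg : Fin n → ℝ := fun i => (1 / (M : ℝ)) * ∑ᶠ v' ∈ π ⁻¹' {Sum.inl i}, xt v'
    (∀ i, 0 ≤ avg i ∧ avg i ≤ (X i : ℝ)) ∧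
    (∀ j, (∑ i, A j i * avg i) ≤ b j) ∧
    (∑ i, w i * avg i) =
      (1 / (M : ℝ)) * ∑ᶠ v' : V', Sum.elim w (fun _ => 0) (π v') * xt v' := by
  have := Fintype.ofFinite V'
  have hM₀ : (0 : ℝ) < M := by exact_mod_cast hM
  have hcard (u) : (#{v' | π v' = u} : ℝ) = M := by
    rw [← hfib u, nat_card_preimage_singleton_eq_card_filter]
  simp only [finsum_mem_preimage_singleton_eq_sum, one_div_mul_eq_div]
  rw [finsum_eq_sum_of_fintype]
  refine ⟨fun i => ⟨?_, ?_⟩, fun j => ?_, ?_⟩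
  · exact div_nonneg (sum_nonneg fun v' hv' => (hbox v' i (mem_filter.1 hv').2).1) hM₀.le
  · rw [div_le_iff₀ hM₀, mul_comm, ← hcard, ← nsmul_eq_mul]
    exact sum_le_card_nsmul _ _ _ fun v' hv' => (hbox v' i (mem_filter.1 hv').2).2
  · have hlift : ∑ c' with π c' = Sum.inr j, ∑ u' with G'.Adj c' u', xt u' ≤ M * b j := by
      rw [← hcard, ← nsmul_eq_mul]
      refine sum_le_card_nsmul _ _ _ fun c' hc' => ?_
      simpa only [finsum_eq_sum_of_fintype, ← sum_filter] using hcons c' j (mem_filter.1 hc').2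
    rw [hcov.sum_fiber_sum_adj, factorGraph_sum_adj_inr hA] at hlift
    simp only [mul_div_assoc', ← sum_div]
    rwa [div_le_iff₀ hM₀, mul_comm]
  · rw [sum_comp_mul_eq_sum_mul_sum_fiber π, Fintype.sum_sum_type]
    simp only [Sum.elim_inl, Sum.elim_inr, zero_mul, sum_const_zero, add_zero, sum_div,
      mul_div_assoc]

/-- A valid assignment on an `M`-lift of the factor graph averages to a feasible solution of
the packing LP, and its (scaled) weight equals the LP objective of the average. -/
theorem average_of_lift_assignment_feasible (n m : ℕ)
    (A : Matrix (Fin m) (Fin n) ℝ) (hA : ∀ j i, A j i = 0 ∨ A j i = 1)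
    (b : Fin m → ℝ) (hb : ∀ j, 0 ≤ b j) (w : Fin n → ℝ) (X : Fin n → ℕ)
    (V' : Type) [Finite V'] (M : ℕ) (hM : 1 ≤ M)
    (G' : SimpleGraph V') (π : V' → Fin n ⊕ Fin m)
    (hcov : IsGraphCoveringMap G' (factorGraph A) π)
    (hfib : ∀ u : Fin n ⊕ Fin m, Nat.card (π ⁻¹' {u}) = M)
    (xt : V' → ℝ)
    (hbox : ∀ v' i, π v' = Sum.inl i → 0 ≤ xt v' ∧ xt v' ≤ (X i : ℝ))
    (hcons : ∀ c' j, π c' = Sum.inr j →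
      (∑ᶠ u' : V', if G'.Adj c' u' then xt u' else 0) ≤ b j) :
    letI avg : Fin n → ℝ := fun i => (1 / (M : ℝ)) * ∑ᶠ v' ∈ π ⁻¹' {Sum.inl i}, xt v'
    (∀ i, 0 ≤ avg i ∧ avg i ≤ (X i : ℝ)) ∧
    (∀ j, (∑ i, A j i * avg i) ≤ b j) ∧
    (∑ i, w i * avg i) =
      (1 / (M : ℝ)) * ∑ᶠ v' : V', Sum.elim w (fun _ => 0) (π v') * xt v' :=
  average_of_lift_assignment_feasible_general n m A hA b w X V' M hM G' π hcov hfib xt hbox hcons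
end

section
/- Let P ⊆ ℝ^n be a nonempty compact polytope containing more than one point, let w ∈ ℝ^n, and let x* be a point of P maximizing wᵀ·x over P. Define c(P,w) = inf{ wᵀ·(x*−x)/‖x*−x‖_1 : x ∈ P, x ≠ x* }. Then c(P,w) ≥ 0, and c(P,w) > 0 if and only if x* is the unique maximizer of wᵀ·x over P. -/
/-!
Write `f x = wᵀ(x* − x)` and `g x = ‖x* − x‖₁`. Nonnegativity of `c(P,w)` is the maximality of
`x*`, and a second maximizer `y` contributes the ratio `0`. Conversely, if `x*` is the unique
maximizer then `f > 0` at every vertex `v ≠ x*`, so some `c > 0` satisfies `c · g ≤ f` at all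
vertices. Since `c · g − f` is convex, it attains its maximum over the polytope at a vertex,
hence `c · g ≤ f` on all of `P` and `c(P,w) ≥ c`.
-/

open Set Filter Topology

theorem ConvexOn.fun_finset_sum {E ι : Type*} [AddCommGroup E] [Module ℝ E] {s : Set E}
    {t : Finset ι} {f : ι → E → ℝ} (hs : Convex ℝ s) (hf : ∀ i ∈ t, ConvexOn ℝ s (f i)) :
    ConvexOn ℝ s fun x => ∑ i ∈ t, f i x := by
  classical
  induction t using Finset.induction_on with
  | empty => simpa using convexOn_const 0 hs
  | insert j t hj ih =>
    simp only [Finset.sum_insert hj]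
    exact (hf j (t.mem_insert_self j)).add (ih fun i hi => hf i (Finset.mem_insert_of_mem hi))

theorem exists_pos_forall_mem_convexHull_mul_le {E : Type*} [AddCommGroup E] [Module ℝ E]
    {f g : E → ℝ} (hf : ConcaveOn ℝ univ f) (hg : ConvexOn ℝ univ g) {S : Finset E}
    (hS : ∀ v ∈ S, 0 < f v ∨ g v ≤ 0 ∧ 0 ≤ f v) :
    ∃ c > 0, ∀ x ∈ convexHull ℝ (S : Set E), c * g x ≤ f x := by
  have hvert : ∀ᶠ c in 𝓝[>] (0 : ℝ), ∀ v ∈ S, c * g v ≤ f v := by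
    rw [eventually_all_finset]
    intro v hv
    rcases hS v hv with hfv | ⟨hgv, hfv⟩
    · have hlim : Tendsto (fun c : ℝ => c * g v) (𝓝[>] 0) (𝓝 0) := by
        simpa using ((continuous_mul_const (g v)).tendsto 0).mono_left nhdsWithin_le_nhds
      exact hlim.eventually (ge_mem_nhds hfv)
    · filter_upwards [self_mem_nhdsWithin] with c (hc : 0 < c)
      exact (mul_nonpos_of_nonneg_of_nonpos hc.le hgv).trans hfv
  obtain ⟨c, hcS, hc⟩ := (hvert.and self_mem_nhdsWithin).exists
  refine ⟨c, hc, fun x hx => ?_⟩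
  obtain ⟨v, hvS, hxv⟩ :=
    ((hg.smul hc.le).sub hf).exists_ge_of_mem_convexHull (subset_univ _) hx
  simp only [Pi.sub_apply, smul_eq_mul] at hxv
  linarith [hcS v hvS]

section SumFormulas

variable {ι : Type*} [Fintype ι]

theorem convexOn_univ_sum_abs_sub (a : ι → ℝ) :
    ConvexOn ℝ univ fun x : ι → ℝ => ∑ i, |a i - x i| := by
  refine ConvexOn.fun_finset_sum convex_univ fun i _ => ?_
  have h := (convexOn_univ_dist (a i)).comp_linearMap
    (LinearMap.proj (R := ℝ) (φ := fun _ : ι => ℝ) i)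
  simpa [Function.comp_def, Real.dist_eq, abs_sub_comm] using h

theorem concaveOn_univ_sum_mul_sub (w a : ι → ℝ) :
    ConcaveOn ℝ univ fun x : ι → ℝ => ∑ i, w i * (a i - x i) := by
  have h : (fun x : ι → ℝ => ∑ i, w i * (a i - x i)) =
      fun x => ∑ i, w i * a i - (∑ i, w i • LinearMap.proj i : (ι → ℝ) →ₗ[ℝ] ℝ) x := by
    ext x
    simp [mul_sub]
  rw [h]
  exact (concaveOn_const _ convex_univ).sub (LinearMap.convexOn _ convex_univ)

theorem sum_mul_sub_eq_sub (w a x : ι → ℝ) :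
    ∑ i, w i * (a i - x i) = ∑ i, w i * a i - ∑ i, w i * x i := by
  simp only [mul_sub, Finset.sum_sub_distrib]

theorem sum_abs_sub_pos {a x : ι → ℝ} (h : x ≠ a) : 0 < ∑ i, |a i - x i| := by
  obtain ⟨i, hi⟩ := Function.ne_iff.mp h
  exact Finset.sum_pos' (fun j _ => abs_nonneg _)
    ⟨i, Finset.mem_univ i, abs_pos.mpr (sub_ne_zero.mpr hi.symm)⟩

end SumFormulas

theorem cPw_nonneg_and_pos_iff_unique_general (N : ℕ) (S : Finset (Fin N → ℝ)) (w : Fin N → ℝ)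
    (P : Set (Fin N → ℝ)) (hP : P = convexHull ℝ (S : Set (Fin N → ℝ)))
    (hPnt : ∃ a ∈ P, ∃ b ∈ P, a ≠ b)
    (xstar : Fin N → ℝ)
    (hmax : ∀ y ∈ P, (∑ i, w i * y i) ≤ ∑ i, w i * xstar i) :
    letI cPw : ℝ := sInf {c : ℝ | ∃ x ∈ P, x ≠ xstar ∧
      c = (∑ i, w i * (xstar i - x i)) / (∑ i, |xstar i - x i|)}
    0 ≤ cPw ∧
    (0 < cPw ↔ ∀ y ∈ P, (∑ i, w i * y i) = (∑ i, w i * xstar i) → y = xstar) := by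
  set A : Set ℝ := {c : ℝ | ∃ x ∈ P, x ≠ xstar ∧
      c = (∑ i, w i * (xstar i - x i)) / (∑ i, |xstar i - x i|)}
  have hA_nonneg : ∀ c ∈ A, 0 ≤ c := by
    rintro c ⟨x, hxP, hx, rfl⟩
    rw [sum_mul_sub_eq_sub]
    exact div_nonneg (sub_nonneg.mpr (hmax x hxP)) (sum_abs_sub_pos hx).le
  refine ⟨Real.sInf_nonneg hA_nonneg, fun hpos y hyP hy => ?_, fun huniq => ?_⟩
  · by_contra hne
    have h0 : (0 : ℝ) ∈ A := ⟨y, hyP, hne, by rw [sum_mul_sub_eq_sub, hy, sub_self, zero_div]⟩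
    exact hpos.not_ge (csInf_le ⟨0, hA_nonneg⟩ h0)
  · have hvert (v) (hv : v ∈ S) : 0 < ∑ i, w i * (xstar i - v i) ∨
        ∑ i, |xstar i - v i| ≤ 0 ∧ 0 ≤ ∑ i, w i * (xstar i - v i) := by
      by_cases hvx : v = xstar
      · subst hvx; simp
      · have hvP : v ∈ P := hP ▸ subset_convexHull ℝ _ hv
        rw [sum_mul_sub_eq_sub, sub_pos]
        exact .inl ((hmax v hvP).lt_of_ne fun h => hvx (huniq v hvP h))
    obtain ⟨c, hc, hcP⟩ := exists_pos_forall_mem_convexHull_mul_le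
      (concaveOn_univ_sum_mul_sub w xstar) (convexOn_univ_sum_abs_sub xstar) hvert
    obtain ⟨z, hzP, hz⟩ := Set.Nontrivial.exists_ne hPnt xstar
    refine hc.trans_le (le_csInf ⟨_, z, hzP, hz, rfl⟩ ?_)
    rintro _ ⟨x, hxP, hx, rfl⟩
    exact (le_div_iff₀ (sum_abs_sub_pos hx)).mpr (hcP x (hP ▸ hxP))

/-- **Properties of the parameter `c(P,w)`** (Definition A.1): for a compact polytope `P`
(the convex hull of a finite set) with more than one point and a maximizer `x*` of `wᵀ·x`
over `P`, the quantity `c(P,w) = inf{ wᵀ·(x*−x)/‖x*−x‖₁ : x ∈ P, x ≠ x* }` is nonnegative,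
and it is positive if and only if `x*` is the unique maximizer. -/
theorem cPw_nonneg_and_pos_iff_unique (N : ℕ) (S : Finset (Fin N → ℝ)) (w : Fin N → ℝ)
    (P : Set (Fin N → ℝ)) (hP : P = convexHull ℝ (S : Set (Fin N → ℝ)))
    (hPne : P.Nonempty) (hPnt : ∃ a ∈ P, ∃ b ∈ P, a ≠ b)
    (xstar : Fin N → ℝ) (hx : xstar ∈ P)
    (hmax : ∀ y ∈ P, (∑ i, w i * y i) ≤ ∑ i, w i * xstar i) :
    letI cPw : ℝ := sInf {c : ℝ | ∃ x ∈ P, x ≠ xstar ∧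
      c = (∑ i, w i * (xstar i - x i)) / (∑ i, |xstar i - x i|)}
    0 ≤ cPw ∧
    (0 < cPw ↔ ∀ y ∈ P, (∑ i, w i * y i) = (∑ i, w i * xstar i) → y = xstar) :=
  cPw_nonneg_and_pos_iff_unique_general N S w P hP hPnt xstar hmax
end

section
/- Let G = (V,E) be a finite simple graph with edges indexed e_1,…,e_k. Define the graph G̃ with vertex set V × {0,1}^k, where for each edge e_i = (u,v) ∈ E and each s ∈ {0,1}^k there is an edge between (u,s) and (v, s ⊕ 1_i) (1_i flips the i-th coordinate). Then the projection (v,s) ↦ v is a covering map from G̃ onto G of fold number 2^k, and for every cycle in G̃, its projection to G traverses each edge of G an even number of times; consequently, if G contains a cycle then girth(G̃) ≥ 2·girth(G). -/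
attribute [local instance] Classical.propDecidable

/-- The `2^k`-lift of `G` obtained by flipping, across each edge `e_i`, the `i`-th bit of a
`{0,1}`-vector of length `k` (Proposition 4.4). -/
def flipLift {V : Type*} (G : SimpleGraph V) {k : ℕ} (e : Fin k ≃ G.edgeSet) :
    SimpleGraph (V × (Fin k → ZMod 2)) where
  Adj p q := ∃ h : G.Adj p.1 q.1,
    q.2 = p.2 + Pi.single (e.symm ⟨s(p.1, q.1), (SimpleGraph.mem_edgeSet G).2 h⟩) 1
  symm := by
    constructor
    intro p q hpq
    obtain ⟨h, hs⟩ := hpq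
    refine ⟨h.symm, ?_⟩
    have hswap : (⟨s(q.1, p.1), (SimpleGraph.mem_edgeSet G).2 h.symm⟩ : G.edgeSet)
        = ⟨s(p.1, q.1), (SimpleGraph.mem_edgeSet G).2 h⟩ := by
      apply Subtype.ext
      exact Sym2.eq_swap
    rw [hswap, hs, add_assoc, ← Pi.single_add]
    have h2 : (1 : ZMod 2) + 1 = 0 := by decide
    rw [h2, Pi.single_zero, add_zero]
  loopless := by
    constructor
    intro p hp
    obtain ⟨h, -⟩ := hp
    exact G.loopless.irrefl p.1 h

/-- The projection `(v,s) ↦ v` as a graph homomorphism `flipLift G e →g G`. -/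
def flipLiftHom {V : Type*} (G : SimpleGraph V) {k : ℕ} (e : Fin k ≃ G.edgeSet) :
    flipLift G e →g G :=
  ⟨Prod.fst, fun hab => hab.choose⟩

/-! A vertex `(u, s)` of the lift and a neighbour `v` of `u` determine the lifted neighbour
`(v, s + 1ᵢ)` with `eᵢ = uv`, so the projection is a covering. Along a walk of the lift the
`i`-th bit flips once per traversal of `eᵢ` by the projected walk, so a closed walk projects to
one using every edge an even number of times. A cycle of length `ℓ` in the lift projects, by
local injectivity, to a closed walk without backtracking; since a non-backtracking walk in a
forest is a path, the at most `ℓ / 2` distinct edges it uses contain a cycle of `G`. -/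

open SimpleGraph

theorem List.two_mul_length_le_of_nodup_of_even_count {α : Type*} [DecidableEq α]
    {l₁ l₂ : List α} (h₁ : l₁.Nodup) (hsub : l₁ ⊆ l₂) (heven : ∀ a ∈ l₁, Even (l₂.count a)) :
    2 * l₁.length ≤ l₂.length := by
  calc 2 * l₁.length = ∑ _a ∈ l₁.toFinset, 2 := by
        rw [Finset.sum_const, smul_eq_mul, List.toFinset_card_of_nodup h₁, mul_comm]
    _ ≤ ∑ a ∈ l₁.toFinset, l₂.count a := by
        refine Finset.sum_le_sum fun a ha => ?_
        rw [List.mem_toFinset] at ha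
        exact Nat.le_of_dvd (List.count_pos_iff.2 (hsub ha)) (heven a ha).two_dvd
    _ ≤ ∑ a ∈ l₂.toFinset, l₂.count a :=
        Finset.sum_le_sum_of_subset fun a ha =>
          List.mem_toFinset.2 (hsub (List.mem_toFinset.1 ha))
    _ = l₂.length := List.sum_toFinset_count_eq_length l₂

namespace SimpleGraph.Walk

variable {V W : Type*} {G : SimpleGraph V} {G' : SimpleGraph W}

theorem isChain_ne_edges_map {f : G →g G'} (hf : ∀ v, Set.InjOn f (G.neighborSet v))
    {u v : V} (p : G.Walk u v) (hp : p.edges.IsChain (· ≠ ·)) :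
    (p.map f).edges.IsChain (· ≠ ·) := by
  induction p with
  | nil => simp
  | @cons a b _ h q ih =>
    cases q with
    | nil => simp
    | @cons _ d _ h' r =>
      simp only [map_cons, edges_cons, List.isChain_cons_cons] at hp ih ⊢
      refine ⟨fun heq => hp.1 ?_, ih hp.2⟩
      have had : f a = f d := by
        rcases Sym2.eq_iff.1 heq with ⟨hab, -⟩ | ⟨had, -⟩
        · exact absurd hab (f.map_adj h).ne
        · exact had
      rw [hf b h.symm h' had, Sym2.eq_swap]

theorem exists_isCycle_edges_subset {u : V} (w : G.Walk u u) (hw : ¬ w.Nil)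
    (hchain : w.edges.IsChain (· ≠ ·)) :
    ∃ (v : V) (c : G.Walk v v), c.IsCycle ∧ c.edges ⊆ w.edges := by
  set H := fromEdgeSet {ε | ε ∈ w.edges}
  have hwH : ∀ ε ∈ w.edges, ε ∈ H.edgeSet := fun ε hε => by
    rw [edgeSet_fromEdgeSet]
    exact ⟨hε, G.not_isDiag_of_mem_edgeSet (w.edges_subset_edgeSet hε)⟩
  have hHw : H.edgeSet ⊆ {ε | ε ∈ w.edges} := by
    rw [edgeSet_fromEdgeSet]
    exact Set.sdiff_subset
  have hH : ¬ H.IsAcyclic := fun hacyc => by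
    have hpath : (w.transfer H hwH).IsPath :=
      (hacyc.isPath_iff_isChain _).2 (by rwa [edges_transfer])
    rw [isPath_iff_nil, ← length_eq_zero_iff, length_transfer, length_eq_zero_iff] at hpath
    exact hw hpath
  obtain ⟨v, c, hc⟩ : ∃ (v : V) (c : H.Walk v v), c.IsCycle := by
    simpa [IsAcyclic] using hH
  have hcG : ∀ ε ∈ c.edges, ε ∈ G.edgeSet := fun ε hε =>
    w.edges_subset_edgeSet (hHw (c.edges_subset_edgeSet hε))
  refine ⟨v, c.transfer G hcG, hc.transfer hcG, ?_⟩
  rw [edges_transfer]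
  exact fun ε hε => hHw (c.edges_subset_edgeSet hε)

theorem two_mul_egirth_le_length [DecidableEq V] {u : V} (w : G.Walk u u) (hw : ¬ w.Nil)
    (hchain : w.edges.IsChain (· ≠ ·)) (heven : ∀ ε ∈ w.edges, Even (w.edges.count ε)) :
    2 * G.egirth ≤ w.length := by
  obtain ⟨v, c, hc, hsub⟩ := w.exists_isCycle_edges_subset hw hchain
  have hlen := List.two_mul_length_le_of_nodup_of_even_count hc.edges_nodup hsub
    fun ε hε => heven ε (hsub hε)
  rw [length_edges, length_edges] at hlen
  calc 2 * G.egirth ≤ 2 * c.length := by gcongr; exact egirth_le_length hc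
    _ ≤ w.length := by exact_mod_cast hlen

end SimpleGraph.Walk

section FlipLift

variable {V : Type*} {G : SimpleGraph V} {k : ℕ} (e : Fin k ≃ G.edgeSet)

theorem flipLift_adj_iff {p q : V × (Fin k → ZMod 2)} :
    (flipLift G e).Adj p q ↔
      G.Adj p.1 q.1 ∧ ∀ i, q.2 i = p.2 i + if (e i : Sym2 V) = s(p.1, q.1) then 1 else 0 := by
  have hsingle : ∀ h : G.Adj p.1 q.1, ∀ i,
      (Pi.single (e.symm ⟨s(p.1, q.1), (mem_edgeSet G).2 h⟩) 1 : Fin k → ZMod 2) i =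
        if (e i : Sym2 V) = s(p.1, q.1) then 1 else 0 := fun h i => by
    simp only [Pi.single_apply, Equiv.eq_symm_apply, Subtype.ext_iff]
  constructor
  · rintro ⟨h, hq⟩
    exact ⟨h, fun i => by rw [hq, Pi.add_apply, hsingle h]⟩
  · rintro ⟨h, hq⟩
    exact ⟨h, funext fun i => by rw [hq, Pi.add_apply, hsingle h]⟩

theorem flipLift_isGraphCoveringMap : IsGraphCoveringMap (flipLift G e) G Prod.fst := by
  refine ⟨fun _ _ h => ((flipLift_adj_iff e).1 h).1, fun p => ⟨?_, ?_, ?_⟩⟩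
  · exact fun q hq => ((flipLift_adj_iff e).1 hq).1
  · intro q hq r hr hqr
    refine Prod.ext hqr (funext fun i => ?_)
    rw [((flipLift_adj_iff e).1 hq).2 i, ((flipLift_adj_iff e).1 hr).2 i, hqr]
  · intro w hw
    exact ⟨(w, p.2 + Pi.single (e.symm ⟨s(p.1, w), (mem_edgeSet G).2 hw⟩) 1), ⟨hw, rfl⟩, rfl⟩

theorem flipLift_walk_snd_apply {x y : V × (Fin k → ZMod 2)} (p : (flipLift G e).Walk x y)
    (i : Fin k) :
    y.2 i = x.2 i + ((p.map (flipLiftHom G e)).edges.count (e i : Sym2 V) : ZMod 2) := by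
  induction p with
  | nil => simp
  | @cons a b _ h q ih =>
    rw [ih, ((flipLift_adj_iff e).1 h).2 i, Walk.map_cons, Walk.edges_cons, List.count_cons]
    by_cases hi : (e i : Sym2 V) = s(a.1, b.1)
    · simp only [hi, flipLiftHom, RelHom.coeFn_mk, Walk.edges_map, BEq.rfl, if_true, Nat.cast_add,
        Nat.cast_one]
      ring
    · simp [flipLiftHom, hi, Ne.symm hi]

theorem even_count_edges_map_flipLiftHom {x : V × (Fin k → ZMod 2)}
    (c : (flipLift G e).Walk x x) (ε : Sym2 V) :
    Even ((c.map (flipLiftHom G e)).edges.count ε) := by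
  by_cases hε : ε ∈ G.edgeSet
  · have hi := flipLift_walk_snd_apply e c (e.symm ⟨ε, hε⟩)
    rw [Equiv.apply_symm_apply, left_eq_add, ZMod.natCast_eq_zero_iff_even] at hi
    exact hi
  · rw [List.count_eq_zero.2 fun hmem => hε (Walk.edges_subset_edgeSet _ hmem)]
    exact Even.zero

end FlipLift

theorem flipLift_covering_and_girth_general (V : Type) (G : SimpleGraph V)
    (k : ℕ) (e : Fin k ≃ G.edgeSet) :
    IsGraphCoveringMap (flipLift G e) G Prod.fst ∧
    (∀ v : V, Nat.card (Prod.fst ⁻¹' {v} : Set (V × (Fin k → ZMod 2))) = 2 ^ k) ∧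
    (∀ (x : V × (Fin k → ZMod 2)) (c : (flipLift G e).Walk x x), c.IsCycle →
      ∀ ε : Sym2 V, Even (List.count ε ((c.map (flipLiftHom G e)).edges))) ∧
    (¬ G.IsAcyclic → 2 * G.egirth ≤ (flipLift G e).egirth) := by
  have hcover := flipLift_isGraphCoveringMap e
  refine ⟨hcover, fun v => ?_, fun _ c _ => even_count_edges_map_flipLiftHom e c, fun _ => ?_⟩
  · rw [Set.preimage_fst_singleton_eq_range,
      Nat.card_range_of_injective (Prod.mk_right_injective v)]
    simp
  · refine le_egirth.2 fun _ c hc => ?_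
    have hchain := Walk.isChain_ne_edges_map (f := flipLiftHom G e) (fun v => (hcover.2 v).injOn)
      c hc.edges_nodup.isChain
    simpa only [Walk.length_map] using Walk.two_mul_egirth_le_length _
      (fun h => hc.not_nil ((Walk.nil_map_iff _).1 h)) hchain
      fun ε _ => even_count_edges_map_flipLiftHom e c ε

/-- **Proposition 4.4 (the `2^k`-lift construction)**: for a finite graph `G` with edges
enumerated by `e : Fin k ≃ G.edgeSet`, the projection `(v,s) ↦ v` is a covering map from
`flipLift G e` onto `G` of fold number `2^k`; the projection of every cycle of the lift
traverses each edge of `G` an even number of times; consequently, if `G` contains a cycle,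
then `girth(flipLift G e) ≥ 2·girth(G)`. -/
theorem flipLift_covering_and_girth (V : Type) [Fintype V] (G : SimpleGraph V)
    (k : ℕ) (e : Fin k ≃ G.edgeSet) :
    IsGraphCoveringMap (flipLift G e) G Prod.fst ∧
    (∀ v : V, Nat.card (Prod.fst ⁻¹' {v} : Set (V × (Fin k → ZMod 2))) = 2 ^ k) ∧
    (∀ (x : V × (Fin k → ZMod 2)) (c : (flipLift G e).Walk x x), c.IsCycle →
      ∀ ε : Sym2 V, Even (List.count ε ((c.map (flipLiftHom G e)).edges))) ∧
    (¬ G.IsAcyclic → 2 * G.egirth ≤ (flipLift G e).egirth) :=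
  flipLift_covering_and_girth_general V G k e
end
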